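/- Let p be a prime and let A be a commutative ℤ_p-algebra that is finitely generated as a ℤ_p-module. Then the number of ℤ_p-algebra homomorphisms A → ℤ_p is finite and is at most the dimension of A/pA as a vector space over 𝔽_p. -/

import Mathlib

/-- Let `A` be a commutative `ℤ_p`-algebra that is finitely generated as a `ℤ_p`-module. Then
the number of `ℤ_p`-algebra homomorphisms `A → ℤ_p` is finite and is at most the dimension of
`A/pA` as an `𝔽_p`-vector space. -/
theorem stmt_5 (p : ℕ) [Fact p.Prime] (A : Type*) [CommRing A] [Algebra ℤ_[p] A]
    [Module.Finite ℤ_[p] A] :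
    letI : Module (ZMod p) (A ⧸ Ideal.span {(p : A)}) :=
      AddCommGroup.zmodModule (by
        intro x
        obtain ⟨y, rfl⟩ := Ideal.Quotient.mk_surjective x
        rw [← map_nsmul]
        exact Ideal.Quotient.eq_zero_iff_mem.2
          (by simpa [nsmul_eq_mul] using
            Ideal.mem_span_singleton.2 ⟨y, rfl⟩))
    Finite (A →ₐ[ℤ_[p]] ℤ_[p]) ∧
    Nat.card (A →ₐ[ℤ_[p]] ℤ_[p]) ≤
      Module.finrank (ZMod p) (A ⧸ Ideal.span {(p : A)}) := by
  let instM : Module (ZMod p) (A ⧸ Ideal.span {(p : A)}) :=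
    AddCommGroup.zmodModule (by
      intro x
      obtain ⟨y, rfl⟩ := Ideal.Quotient.mk_surjective x
      rw [← map_nsmul]
      exact Ideal.Quotient.eq_zero_iff_mem.2
        (by simpa [nsmul_eq_mul] using
          Ideal.mem_span_singleton.2 ⟨y, rfl⟩))
  set I : Ideal A := Ideal.span {(p : A)} with hI
  -- the quotient map as a `ℤ_[p]`-linear map
  have hf : ∀ a : A, (Ideal.Quotient.mkₐ ℤ_[p] I).toLinearMap a = Ideal.Quotient.mk I a :=
    fun a => rfl
  set f : A →ₗ[ℤ_[p]] A ⧸ I := (Ideal.Quotient.mkₐ ℤ_[p] I).toLinearMap with hfdef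
  -- the `ZMod p` smul on the quotient is `val`-nsmul, hence `ℤ_[p]`-smul of the nat cast
  have hsmulZ : ∀ (c : ZMod p) (v : A ⧸ I), c • v = ((c.val : ℕ) : ℤ_[p]) • v := by
    intro c v
    rw [Nat.cast_smul_eq_nsmul ℤ_[p], ← Nat.cast_smul_eq_nsmul (ZMod p),
      ZMod.natCast_rightInverse c]
  -- multiples of `p` act trivially on the quotient
  have hker : ∀ (c : ℤ_[p]) (y : A), c ∈ IsLocalRing.maximalIdeal ℤ_[p] →
      c • (Ideal.Quotient.mk I y) = 0 := by
    intro c y hc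
    rw [PadicInt.maximalIdeal_eq_span_p, Ideal.mem_span_singleton] at hc
    obtain ⟨u, rfl⟩ := hc
    rw [← hf, ← map_smul, mul_smul, hf]
    have : ((p : ℕ) : ℤ_[p]) • (u • y) = (p : A) * (u • y) := by
      rw [Algebra.smul_def, map_natCast]
    rw [this]
    exact Ideal.Quotient.eq_zero_iff_mem.2 (Ideal.mem_span_singleton.2 ⟨u • y, rfl⟩)
  -- `ℤ_[p]`-smul on the quotient factors through `toZMod`
  have hsmulP : ∀ (c : ℤ_[p]) (v : A ⧸ I), c • v = (PadicInt.toZMod c) • v := by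
    intro c v
    obtain ⟨y, rfl⟩ := Ideal.Quotient.mk_surjective (I := I) v
    rw [hsmulZ]
    rw [← sub_eq_zero, ← sub_smul]
    apply hker
    have := PadicInt.toZMod_spec c
    rwa [← ZMod.natCast_val] at this
  haveI : Module.Finite ℤ_[p] (A ⧸ I) :=
    Module.Finite.of_surjective f (fun y => Ideal.Quotient.mk_surjective (I := I) y)
  -- `A ⧸ I` is finite over `ZMod p`
  haveI : Module.Finite (ZMod p) (A ⧸ I) := by
    obtain ⟨s, hs⟩ := Module.finite_def.mp (inferInstance : Module.Finite ℤ_[p] (A ⧸ I))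
    refine ⟨⟨s, top_le_iff.mp ?_⟩⟩
    rintro v -
    have hv : v ∈ Submodule.span ℤ_[p] (s : Set (A ⧸ I)) := hs ▸ Submodule.mem_top
    induction hv using Submodule.span_induction with
    | mem w hw => exact Submodule.subset_span hw
    | zero => exact Submodule.zero_mem _
    | add y z hy hz ihy ihz => exact Submodule.add_mem _ ihy ihz
    | smul c y hy ihy => rw [hsmulP]; exact Submodule.smul_mem _ _ ihy
  -- a basis of `A ⧸ I` over `ZMod p`, lifted to generators of `A`
  set d := Module.finrank (ZMod p) (A ⧸ I) with hd
  let b : Module.Basis (Fin d) (ZMod p) (A ⧸ I) := Module.finBasis (ZMod p) (A ⧸ I)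
  choose x hx using fun i => Ideal.Quotient.mk_surjective (I := I) (b i)
  -- every element of the quotient is a `ℤ_[p]`-combination of the `mk (x i)`
  have hQspan : ∀ v : A ⧸ I,
      v ∈ Submodule.span ℤ_[p] (Set.range fun i => Ideal.Quotient.mk I (x i)) := by
    intro v
    have hv : v ∈ Submodule.span (ZMod p) (Set.range ⇑b) := b.span_eq ▸ Submodule.mem_top
    induction hv using Submodule.span_induction with
    | mem w hw =>
      obtain ⟨i, rfl⟩ := hw
      exact Submodule.subset_span ⟨i, hx i⟩
    | zero => exact Submodule.zero_mem _
    | add y z hy hz ihy ihz => exact Submodule.add_mem _ ihy ihz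
    | smul c y hy ihy => rw [hsmulZ]; exact Submodule.smul_mem _ _ ihy
  -- Nakayama: the `x i` generate `A` over `ℤ_[p]`
  set N : Submodule ℤ_[p] A := Submodule.span ℤ_[p] (Set.range x) with hN
  have hspan : (⊤ : Submodule ℤ_[p] A) ≤ N := by
    refine Submodule.le_of_le_smul_of_le_jacobson_bot (Module.finite_def.mp inferInstance)
      (IsLocalRing.jacobson_eq_maximalIdeal ⊥ bot_ne_top).ge ?_
    intro a _
    have h1 : Ideal.Quotient.mk I a ∈
        Submodule.span ℤ_[p] (Set.range fun i => Ideal.Quotient.mk I (x i)) := hQspan _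
    have h2 : Submodule.span ℤ_[p] (Set.range fun i => Ideal.Quotient.mk I (x i)) =
        N.map f := by
      rw [hN, Submodule.map_span, ← Set.range_comp]
      rfl
    rw [h2] at h1
    obtain ⟨n, hn, hna⟩ := h1
    have hd1 : a - n ∈ I := by
      have : n - a ∈ I := Ideal.Quotient.eq.mp (by rw [← hf n, hna])
      simpa using I.neg_mem this
    obtain ⟨y, hy⟩ := Ideal.mem_span_singleton'.mp hd1
    have hmem : a - n ∈ (IsLocalRing.maximalIdeal ℤ_[p]) • (⊤ : Submodule ℤ_[p] A) := by
      have hp : ((p : ℕ) : ℤ_[p]) ∈ IsLocalRing.maximalIdeal ℤ_[p] := by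
        rw [PadicInt.maximalIdeal_eq_span_p]
        exact Ideal.subset_span rfl
      have : a - n = ((p : ℕ) : ℤ_[p]) • y := by
        rw [Algebra.smul_def, map_natCast, mul_comm, hy]
      rw [this]
      exact Submodule.smul_mem_smul hp Submodule.mem_top
    have : a = n + (a - n) := by ring
    rw [this]
    exact Submodule.add_mem_sup hn hmem
  -- Linear independence of the evaluation vectors of the algebra homomorphisms
  set F := (A →ₐ[ℤ_[p]] ℤ_[p]) with hF
  let ι : F → (A →* ℚ_[p]) := fun φ => ((PadicInt.Coe.ringHom).comp φ.toRingHom).toMonoidHom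
  have hι : Function.Injective ι := by
    intro φ ψ h
    ext a
    have := DFunLike.congr_fun h a
    exact Subtype.coe_injective this
  have li0 : LinearIndependent ℚ_[p]
      (fun φ : F => ((ι φ : A →* ℚ_[p]) : A → ℚ_[p])) :=
    (linearIndependent_monoidHom A ℚ_[p]).comp ι hι
  let v : F → (Fin d → ℚ_[p]) := fun φ i => ((φ (x i) : ℤ_[p]) : ℚ_[p])
  have li : LinearIndependent ℚ_[p] v := by
    rw [linearIndependent_iff] at li0 ⊢
    intro l hl
    have hl' : ∀ i, (l.sum fun φ c => c * ((φ (x i) : ℤ_[p]) : ℚ_[p])) = 0 := by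
      intro i
      have := congrFun hl i
      simpa [Finsupp.linearCombination_apply, Finsupp.sum, Finset.sum_apply,
        smul_eq_mul, v] using this
    have key : ∀ a : A, (l.sum fun φ c => c * ((φ a : ℤ_[p]) : ℚ_[p])) = 0 := by
      intro a
      have ha : a ∈ Submodule.span ℤ_[p] (Set.range x) := hspan Submodule.mem_top
      induction ha using Submodule.span_induction with
      | mem w hw =>
        obtain ⟨i, rfl⟩ := hw
        exact hl' i
      | zero => simp
      | add y z hy hz ihy ihz =>
        have : (l.sum fun φ c => c * ((φ (y + z) : ℤ_[p]) : ℚ_[p])) =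
            (l.sum fun φ c => c * ((φ y : ℤ_[p]) : ℚ_[p]))
              + (l.sum fun φ c => c * ((φ z : ℤ_[p]) : ℚ_[p])) := by
          rw [← Finsupp.sum_add]
          exact Finsupp.sum_congr fun φ _ => by push_cast [map_add]; ring
        rw [this, ihy, ihz, add_zero]
      | smul c y hy ihy =>
        have : (l.sum fun φ c' => c' * ((φ (c • y) : ℤ_[p]) : ℚ_[p])) =
            (c : ℚ_[p]) * (l.sum fun φ c' => c' * ((φ y : ℤ_[p]) : ℚ_[p])) := by
          rw [Finsupp.mul_sum]
          refine Finsupp.sum_congr fun φ _ => ?_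
          have : φ (c • y) = c * φ y := by
            rw [Algebra.smul_def, map_mul, AlgHom.commutes]
            rfl
          rw [this]
          push_cast
          ring
        rw [this, ihy, mul_zero]
    refine li0 l ?_
    funext a
    have hka := key a
    simp [Finsupp.linearCombination_apply, Finsupp.sum, Finset.sum_apply,
      smul_eq_mul, Function.comp, ι] at hka ⊢
    exact hka
  -- conclude
  constructor
  · have := li.lt_aleph0_of_finite
    exact (Cardinal.mk_lt_aleph0_iff).mp this
  · have hfin : Finite F := (Cardinal.mk_lt_aleph0_iff).mp li.lt_aleph0_of_finite
    haveI := Fintype.ofFinite F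
    rw [Nat.card_eq_fintype_card]
    have := li.fintype_card_le_finrank
    rw [Module.finrank_fin_fun] at this
    have smul_eq : ∀ (m : Module (ZMod p) (A ⧸ I)) (c : ZMod p) (v : A ⧸ I),
        (letI := m; c • v) = c.val • v := fun m c v => by
      letI := m
      rw [← Nat.cast_smul_eq_nsmul (ZMod p), ZMod.natCast_rightInverse c]
    have modeq : ∀ (m₁ m₂ : Module (ZMod p) (A ⧸ I)), m₁ = m₂ := fun m₁ m₂ =>
      Module.ext' m₁ m₂ fun c v => (smul_eq m₁ c v).trans (smul_eq m₂ c v).symm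
    convert this using 2
    exact (modeq _ _).symm
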